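/- For the explicit Lévy–Smirnov density g_{1/2}(x) = exp(-1/(4x))/(2√π x^{3/2}), the function h(x) = ∫_0^∞ t^{-2} g_{1/2}(x/t²) g_{1/2}(t) dt satisfies ∫_0^∞ e^{-px} h(x) dx = exp(-p^{1/4}) for all p > 0. -/

import Mathlib

/-!
Substituting `x = u²` turns the Laplace transform of `g_{1/2}` at `q` into
`π^{-1/2} ∫₀^∞ exp (-(q u² + 1/(4u²))) u⁻² du`. The Cauchy–Schlömilch substitution
`y = a u - b/u` maps `(0, ∞)` onto `ℝ` and carries `(a + b/u²) exp (-(a u - b/u)²) du` to the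
Gaussian, while the inversion `u ↦ b/(a u)` exchanges the contributions of `a` and of `b/u²`;
this gives `∫₀^∞ exp (-(a²u² + b²/u²)) u⁻² du = √π e^{-2ab} / (2b)`, hence the Laplace transform
`exp (-√q)` of `g_{1/2}`. By scaling, `M_{1/2}(t, ·)` has Laplace transform `exp (-t √p)`, and
Tonelli reduces the Laplace transform of `h` at `p` to that of `g_{1/2}` at `√p`.
-/

open MeasureTheory Real Set

noncomputable def levySmirnov (x : ℝ) : ℝ :=
  Real.exp (-1 / (4 * x)) / (2 * Real.sqrt π * x ^ ((3 : ℝ) / 2))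

theorem hasDerivAt_mul_sub_div (a b : ℝ) {u : ℝ} (hu : u ≠ 0) :
    HasDerivAt (fun u => a * u - b / u) (a + b / u ^ 2) u := by
  have h : HasDerivAt (fun v => a * v - b * v⁻¹) (a * 1 - b * -(u ^ 2)⁻¹) u :=
    ((hasDerivAt_id' u).const_mul a).sub ((hasDerivAt_inv hu).const_mul b)
  simpa only [div_eq_mul_inv, mul_one, mul_neg, sub_neg_eq_add] using h

section ChangeOfVariables

variable {E : Type*} [NormedAddCommGroup E] [NormedSpace ℝ E] {a b : ℝ}

theorem integral_comp_const_div_Ioi (f : ℝ → E) {c : ℝ} (hc : 0 < c) :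
    ∫ x in Ioi 0, (c / x ^ 2) • f (c / x) = ∫ x in Ioi 0, f x := by
  have hderiv : ∀ x ∈ Ioi (0 : ℝ), HasDerivWithinAt (c / ·) (-c / x ^ 2) (Ioi 0) x := by
    intro x hx
    have := ((hasDerivAt_inv (ne_of_gt hx)).const_mul c).hasDerivWithinAt (s := Ioi 0)
    simpa only [div_eq_mul_inv, neg_mul, mul_neg] using this
  have hinj : InjOn (c / ·) (Ioi (0 : ℝ)) := fun x _ y _ h =>
    inv_injective (mul_left_cancel₀ hc.ne' h)
  have himage : (c / ·) '' Ioi (0 : ℝ) = Ioi 0 := by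
    refine (image_subset_iff.2 fun x hx => div_pos hc hx).antisymm fun y hy => ?_
    exact ⟨c / y, div_pos hc hy, div_div_cancel₀ hc.ne'⟩
  calc ∫ x in Ioi 0, (c / x ^ 2) • f (c / x)
      = ∫ x in Ioi 0, |-c / x ^ 2| • f (c / x) :=
        setIntegral_congr_fun measurableSet_Ioi fun x (hx : 0 < x) => by
          rw [neg_div, abs_neg, abs_of_pos (by positivity)]
    _ = ∫ x in Ioi 0, f x := by
      rw [← integral_image_eq_integral_abs_deriv_smul measurableSet_Ioi hderiv hinj, himage]

theorem strictMonoOn_mul_sub_div (ha : 0 ≤ a) (hb : 0 < b) :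
    StrictMonoOn (fun u => a * u - b / u) (Ioi 0) := fun u (hu : 0 < u) v _ huv => by
  have : b / v < b / u := div_lt_div_of_pos_left hb hu huv
  nlinarith

theorem image_mul_sub_div_Ioi (ha : 0 < a) (hb : 0 < b) :
    (fun u => a * u - b / u) '' Ioi 0 = univ := by
  refine eq_univ_of_forall fun y => ?_
  set r := √(y ^ 2 + 4 * a * b)
  have hr : r ^ 2 = y ^ 2 + 4 * a * b := sq_sqrt (by positivity)
  have hyr : 0 < y + r := by nlinarith [sqrt_nonneg (y ^ 2 + 4 * a * b), mul_pos ha hb]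
  -- the positive root of `a u² - y u - b`
  refine ⟨(y + r) / (2 * a), div_pos hyr (by positivity), ?_⟩
  field_simp
  linear_combination hr

theorem integral_comp_mul_sub_div_Ioi (g : ℝ → E) (ha : 0 < a) (hb : 0 < b) :
    ∫ u in Ioi 0, (a + b / u ^ 2) • g (a * u - b / u) = ∫ y, g y :=
  calc ∫ u in Ioi 0, (a + b / u ^ 2) • g (a * u - b / u)
      = ∫ u in Ioi 0, |a + b / u ^ 2| • g (a * u - b / u) :=
        setIntegral_congr_fun measurableSet_Ioi fun (u : ℝ) (hu : 0 < u) => by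
          rw [abs_of_pos (by positivity)]
    _ = ∫ y in univ, g y := by
      rw [← image_mul_sub_div_Ioi ha hb, integral_image_eq_integral_abs_deriv_smul
        measurableSet_Ioi (fun u hu => (hasDerivAt_mul_sub_div a b (ne_of_gt hu)).hasDerivWithinAt)
        (strictMonoOn_mul_sub_div ha.le hb).injOn]
    _ = ∫ y, g y := setIntegral_univ

theorem integrableOn_comp_mul_sub_div_Ioi_iff (g : ℝ → E) (ha : 0 < a) (hb : 0 < b) :
    IntegrableOn (fun u => (a + b / u ^ 2) • g (a * u - b / u)) (Ioi 0) ↔ Integrable g := by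
  rw [← integrableOn_univ, ← image_mul_sub_div_Ioi ha hb,
    integrableOn_image_iff_integrableOn_abs_deriv_smul measurableSet_Ioi
      (fun u hu => (hasDerivAt_mul_sub_div a b (ne_of_gt hu)).hasDerivWithinAt)
      (strictMonoOn_mul_sub_div ha.le hb).injOn]
  exact integrableOn_congr_fun (fun (u : ℝ) (hu : 0 < u) => by rw [abs_of_pos (by positivity)])
    measurableSet_Ioi

end ChangeOfVariables

section GaussianSchlomilch

variable {a b : ℝ}

theorem exp_neg_sq_add_div_sq {u : ℝ} (hu : u ≠ 0) :
    exp (-((a * u) ^ 2 + (b / u) ^ 2)) = exp (-(2 * a * b)) * exp (-(a * u - b / u) ^ 2) := by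
  rw [← exp_add]
  congr 1
  field_simp
  ring

theorem integrableOn_Ioi_add_div_sq_mul_exp (ha : 0 < a) (hb : 0 < b) :
    IntegrableOn (fun u => (a + b / u ^ 2) * exp (-((a * u) ^ 2 + (b / u) ^ 2))) (Ioi 0) := by
  have hgauss : Integrable fun y : ℝ => exp (-y ^ 2) := by
    simpa using integrable_exp_neg_mul_sq one_pos
  refine IntegrableOn.congr_fun
    (((integrableOn_comp_mul_sub_div_Ioi_iff _ ha hb).2 hgauss).const_mul (exp (-(2 * a * b))))
    (fun (u : ℝ) (hu : 0 < u) => ?_) measurableSet_Ioi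
  rw [exp_neg_sq_add_div_sq hu.ne', smul_eq_mul]
  ring

theorem integral_Ioi_add_div_sq_mul_exp (ha : 0 < a) (hb : 0 < b) :
    ∫ u in Ioi 0, (a + b / u ^ 2) * exp (-((a * u) ^ 2 + (b / u) ^ 2)) =
      √π * exp (-(2 * a * b)) := by
  calc ∫ u in Ioi 0, (a + b / u ^ 2) * exp (-((a * u) ^ 2 + (b / u) ^ 2))
      = ∫ u in Ioi 0, exp (-(2 * a * b)) * ((a + b / u ^ 2) • exp (-(a * u - b / u) ^ 2)) :=
        setIntegral_congr_fun measurableSet_Ioi fun (u : ℝ) (hu : 0 < u) => by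
          rw [exp_neg_sq_add_div_sq hu.ne', smul_eq_mul]
          ring
    _ = √π * exp (-(2 * a * b)) := by
      rw [integral_const_mul, integral_comp_mul_sub_div_Ioi (fun y => exp (-y ^ 2)) ha hb,
        show ∫ y : ℝ, exp (-y ^ 2) = √π by simpa using integral_gaussian 1, mul_comm]

theorem integrableOn_Ioi_exp_neg_sq_add_div_sq_div_sq (ha : 0 < a) (hb : 0 < b) :
    IntegrableOn (fun u => exp (-((a * u) ^ 2 + (b / u) ^ 2)) / u ^ 2) (Ioi 0) := by
  refine Integrable.mono' ((integrableOn_Ioi_add_div_sq_mul_exp ha hb).div_const b)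
    (by fun_prop : Measurable _).aestronglyMeasurable
    ((ae_restrict_iff' measurableSet_Ioi).2 (.of_forall fun u (hu : 0 < u) => ?_))
  rw [norm_of_nonneg (by positivity), le_div_iff₀ hb]
  have hE := exp_pos (-((a * u) ^ 2 + (b / u) ^ 2))
  generalize exp (-((a * u) ^ 2 + (b / u) ^ 2)) = E at hE ⊢
  rw [show (a + b / u ^ 2) * E = a * E + E / u ^ 2 * b by ring]
  linarith [mul_pos ha hE]

theorem integral_Ioi_exp_neg_sq_add_div_sq_div_sq (ha : 0 < a) (hb : 0 < b) :
    ∫ u in Ioi 0, exp (-((a * u) ^ 2 + (b / u) ^ 2)) / u ^ 2 =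
      √π / (2 * b) * exp (-(2 * a * b)) := by
  set E : ℝ → ℝ := fun u => exp (-((a * u) ^ 2 + (b / u) ^ 2)) with hE
  have hinv : ∀ u ≠ 0, E (b / a / u) = E u := fun u hu => by
    simp only [hE]
    congr 2
    field_simp
    ring
  have hsymm : ∫ u in Ioi 0, b * (E u / u ^ 2) = ∫ u in Ioi 0, a * E u := by
    rw [← integral_comp_const_div_Ioi (fun u => a * E u) (div_pos hb ha)]
    refine setIntegral_congr_fun measurableSet_Ioi fun (u : ℝ) (hu : 0 < u) => ?_
    rw [smul_eq_mul, hinv u hu.ne']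
    field_simp
  have hsplit : ∫ u in Ioi 0, a * E u =
      (∫ u in Ioi 0, (a + b / u ^ 2) * E u) - ∫ u in Ioi 0, b * (E u / u ^ 2) := by
    rw [← integral_sub (integrableOn_Ioi_add_div_sq_mul_exp ha hb)
      ((integrableOn_Ioi_exp_neg_sq_add_div_sq_div_sq ha hb).const_mul b)]
    refine setIntegral_congr_fun measurableSet_Ioi fun (u : ℝ) (hu : 0 < u) => ?_
    ring
  rw [integral_Ioi_add_div_sq_mul_exp ha hb, ← hsymm, integral_const_mul] at hsplit
  rw [div_mul_eq_mul_div, eq_div_iff (by positivity)]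
  linarith

end GaussianSchlomilch

section LevySmirnov

variable {q x u : ℝ}

@[fun_prop]
theorem measurable_levySmirnov : Measurable levySmirnov := by
  unfold levySmirnov
  fun_prop

theorem levySmirnov_pos (hx : 0 < x) : 0 < levySmirnov x := by
  unfold levySmirnov
  have := rpow_pos_of_pos hx (3 / 2)
  positivity

theorem levySmirnov_sq (hu : 0 < u) :
    levySmirnov (u ^ 2) = exp (-(1 / 2 / u) ^ 2) / (2 * √π * u ^ 3) := by
  have h32 : (u ^ 2) ^ ((3 : ℝ) / 2) = u ^ 3 := by
    rw [← rpow_natCast, ← rpow_mul hu.le, ← rpow_natCast]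
    norm_num
  rw [levySmirnov, h32]
  congr 2
  ring

theorem rpow_smul_exp_mul_levySmirnov_rpow (hq : 0 ≤ q) (hu : 0 < u) :
    u ^ ((2 : ℝ) - 1) • (exp (-q * u ^ (2 : ℝ)) * levySmirnov (u ^ (2 : ℝ))) =
      (2 * √π)⁻¹ * (exp (-((√q * u) ^ 2 + (1 / 2 / u) ^ 2)) / u ^ 2) := by
  rw [show (2 : ℝ) - 1 = 1 by norm_num, rpow_one, rpow_two, levySmirnov_sq hu, smul_eq_mul,
    mul_pow, sq_sqrt hq, neg_add, exp_add, neg_mul]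
  field_simp

theorem integrableOn_exp_mul_levySmirnov (hq : 0 < q) :
    IntegrableOn (fun x => exp (-q * x) * levySmirnov x) (Ioi 0) := by
  refine (integrableOn_Ioi_comp_rpow_iff' _ two_ne_zero).1 ?_
  exact IntegrableOn.congr_fun
    ((integrableOn_Ioi_exp_neg_sq_add_div_sq_div_sq (sqrt_pos.2 hq) one_half_pos).const_mul _)
    (fun (u : ℝ) (hu : 0 < u) => (rpow_smul_exp_mul_levySmirnov_rpow hq.le hu).symm)
    measurableSet_Ioi

theorem integral_exp_mul_levySmirnov (hq : 0 < q) :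
    ∫ x in Ioi 0, exp (-q * x) * levySmirnov x = exp (-√q) := by
  calc ∫ x in Ioi 0, exp (-q * x) * levySmirnov x
      = ∫ u in Ioi 0, (2 * u ^ ((2 : ℝ) - 1)) •
          (exp (-q * u ^ (2 : ℝ)) * levySmirnov (u ^ (2 : ℝ))) :=
        (integral_comp_rpow_Ioi_of_pos two_pos).symm
    _ = ∫ u in Ioi 0, (√π)⁻¹ * (exp (-((√q * u) ^ 2 + (1 / 2 / u) ^ 2)) / u ^ 2) :=
        setIntegral_congr_fun measurableSet_Ioi fun (u : ℝ) (hu : 0 < u) => by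
          rw [mul_smul, rpow_smul_exp_mul_levySmirnov_rpow hq.le hu, smul_eq_mul]
          field_simp
    _ = exp (-√q) := by
      rw [integral_const_mul,
        integral_Ioi_exp_neg_sq_add_div_sq_div_sq (sqrt_pos.2 hq) one_half_pos]
      field_simp

end LevySmirnov

theorem integral_integral_swap_of_nonneg {α β : Type*} [MeasurableSpace α] [MeasurableSpace β]
    {μ : Measure α} {ν : Measure β} [SFinite μ] [SFinite ν] {f : α → β → ℝ}
    (hf : AEStronglyMeasurable (Function.uncurry f) (μ.prod ν))
    (hf_nonneg : ∀ᵐ y ∂ν, ∀ᵐ x ∂μ, 0 ≤ f x y)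
    (hf_int : ∀ᵐ y ∂ν, Integrable (fun x => f x y) μ)
    (hF_int : Integrable (fun y => ∫ x, f x y ∂μ) ν) :
    ∫ x, ∫ y, f x y ∂ν ∂μ = ∫ y, ∫ x, f x y ∂μ ∂ν := by
  refine integral_integral_swap ((integrable_prod_iff' hf).2 ⟨hf_int, hF_int.congr ?_⟩)
  filter_upwards [hf_nonneg] with y hy
  exact integral_congr_ae (hy.mono fun x hx => (norm_of_nonneg hx).symm)

section Subordination

variable {p t : ℝ}

/-- The kernel `M_{1/2}(t, x)` of the composition law. -/
noncomputable def levySmirnovKernel (t x : ℝ) : ℝ := (t ^ 2)⁻¹ * levySmirnov (x / t ^ 2)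

theorem levySmirnovKernel_pos {x : ℝ} (ht : t ≠ 0) (hx : 0 < x) :
    0 < levySmirnovKernel t x := by
  have ht2 : 0 < t ^ 2 := by positivity
  exact mul_pos (inv_pos.2 ht2) (levySmirnov_pos (div_pos hx ht2))

theorem exp_mul_levySmirnovKernel (x : ℝ) (ht : t ≠ 0) :
    exp (-p * x) * levySmirnovKernel t x =
      (t ^ 2)⁻¹ * (exp (-(p * t ^ 2) * (x * (t ^ 2)⁻¹)) * levySmirnov (x * (t ^ 2)⁻¹)) := by
  rw [levySmirnovKernel, ← div_eq_mul_inv]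
  field_simp

theorem integrableOn_exp_mul_levySmirnovKernel (hp : 0 < p) (ht : t ≠ 0) :
    IntegrableOn (fun x => exp (-p * x) * levySmirnovKernel t x) (Ioi 0) := by
  have ht2 : 0 < t ^ 2 := by positivity
  have hG := (integrableOn_Ioi_comp_mul_right_iff _ 0 (inv_pos.2 ht2)).2
    (zero_mul (t ^ 2)⁻¹ ▸ integrableOn_exp_mul_levySmirnov (mul_pos hp ht2))
  exact IntegrableOn.congr_fun (hG.const_mul (t ^ 2)⁻¹)
    (fun x _ => (exp_mul_levySmirnovKernel x ht).symm) measurableSet_Ioi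

theorem integral_exp_mul_levySmirnovKernel (hp : 0 < p) (ht : 0 < t) :
    ∫ x in Ioi 0, exp (-p * x) * levySmirnovKernel t x = exp (-√p * t) := by
  have ht2 : 0 < t ^ 2 := by positivity
  simp_rw [exp_mul_levySmirnovKernel _ ht.ne']
  rw [integral_const_mul,
    integral_comp_mul_right_Ioi (fun y => exp (-(p * t ^ 2) * y) * levySmirnov y) 0 (inv_pos.2 ht2),
    zero_mul,
    integral_exp_mul_levySmirnov (mul_pos hp ht2), sqrt_mul hp.le, sqrt_sq ht.le, smul_eq_mul,
    inv_inv, ← mul_assoc, inv_mul_cancel₀ ht2.ne', one_mul, neg_mul]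

theorem integral_exp_mul_integral_levySmirnovKernel_mul {f : ℝ → ℝ} (hp : 0 < p)
    (hf : Measurable f) (hf_nonneg : ∀ t ∈ Ioi (0 : ℝ), 0 ≤ f t)
    (hf_int : IntegrableOn (fun t => exp (-√p * t) * f t) (Ioi 0)) :
    ∫ x in Ioi 0, exp (-p * x) * ∫ t in Ioi 0, levySmirnovKernel t x * f t =
      ∫ t in Ioi 0, exp (-√p * t) * f t := by
  have hslice : ∀ t ∈ Ioi (0 : ℝ),
      ∫ x in Ioi 0, exp (-p * x) * (levySmirnovKernel t x * f t) = exp (-√p * t) * f t :=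
    fun t (ht : 0 < t) => by
      simp_rw [← mul_assoc]
      rw [integral_mul_const, integral_exp_mul_levySmirnovKernel hp ht]
  calc ∫ x in Ioi 0, exp (-p * x) * ∫ t in Ioi 0, levySmirnovKernel t x * f t
      = ∫ x in Ioi 0, ∫ t in Ioi 0, exp (-p * x) * (levySmirnovKernel t x * f t) := by
        simp_rw [integral_const_mul]
    _ = ∫ t in Ioi 0, ∫ x in Ioi 0, exp (-p * x) * (levySmirnovKernel t x * f t) := by
      refine integral_integral_swap_of_nonneg ?_ ?_ ?_ ?_
      · refine Measurable.aestronglyMeasurable ?_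
        simp only [Function.uncurry_def, levySmirnovKernel]
        fun_prop
      · refine ae_restrict_of_forall_mem measurableSet_Ioi fun t (ht : 0 < t) => ?_
        refine ae_restrict_of_forall_mem measurableSet_Ioi fun x (hx : 0 < x) => ?_
        have := levySmirnovKernel_pos ht.ne' hx
        have := hf_nonneg t ht
        positivity
      · refine ae_restrict_of_forall_mem measurableSet_Ioi fun t (ht : 0 < t) => ?_
        simpa only [mul_assoc] using
          (integrableOn_exp_mul_levySmirnovKernel hp ht.ne').mul_const (f t)
      · exact hf_int.congr_fun (fun t ht => (hslice t ht).symm) measurableSet_Ioi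
    _ = ∫ t in Ioi 0, exp (-√p * t) * f t := setIntegral_congr_fun measurableSet_Ioi hslice

end Subordination

theorem laplace_half_selfComposition :
    ∀ p : ℝ, 0 < p →
      (∫ x in Ioi (0 : ℝ), Real.exp (-p * x) *
        ∫ t in Ioi (0 : ℝ), (t ^ (2 : ℕ))⁻¹ * levySmirnov (x / t ^ (2 : ℕ)) * levySmirnov t)
        = Real.exp (-(p ^ ((1 : ℝ) / 4))) := by
  intro p hp
  have hsqrt : 0 < √p := sqrt_pos.2 hp
  calc _ = ∫ t in Ioi 0, exp (-√p * t) * levySmirnov t :=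
        integral_exp_mul_integral_levySmirnovKernel_mul hp measurable_levySmirnov
          (fun t ht => (levySmirnov_pos ht).le) (integrableOn_exp_mul_levySmirnov hsqrt)
    _ = exp (-√√p) := integral_exp_mul_levySmirnov hsqrt
    _ = exp (-(p ^ ((1 : ℝ) / 4))) := by
      rw [sqrt_eq_rpow, sqrt_eq_rpow, ← rpow_mul hp.le]
      norm_num
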